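/- arXiv:math/0306230 — 2 statements merged into one kernel-verified Lean document; each statement's English description precedes it below -/
import Mathlib

section
/- The colored Jones function of the left-handed trefoil, J(n) = Σ_{k=0}^{n} (-1)^k q^{k(k+3)/2+nk} (q^{-n-1};q^{-1})_k (q^{-n+1};q)_k, satisfies the first-order inhomogeneous recursion J(n) = q^{n-2}·(q^{2n} - q)/(q^n - 1) − q^{3n-1}·(1 - q^{n-1})/(1 - q^n)·J(n-1) for all n ≥ 1. -/
open Finset

/-- The colored Jones function of the left-handed trefoil, viewed in the field `ℚ(q)`:
`J(n) = Σ_{k=0}^{n} (-1)^k q^{k(k+3)/2 + nk} (q^{-n-1};q^{-1})_k (q^{-n+1};q)_k`. -/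
noncomputable def J31 (n : ℕ) : RatFunc ℚ :=
  ∑ k ∈ range (n + 1),
    (-1) ^ k * RatFunc.X ^ ((k * (k + 3) : ℤ) / 2 + (n : ℤ) * k) *
      (∏ j ∈ range k, (1 - RatFunc.X ^ (-(n : ℤ) - 1 - j))) *
      (∏ j ∈ range k, (1 - RatFunc.X ^ (-(n : ℤ) + 1 + j)))


private lemma X_zpow_ne_one (m : ℤ) (hm : m ≠ 0) : (RatFunc.X : RatFunc ℚ) ^ m ≠ 1 := by
  have key : ∀ j : ℕ, j ≠ 0 → (RatFunc.X : RatFunc ℚ) ^ (j : ℤ) ≠ 1 := by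
    intro j hj h
    rw [zpow_natCast] at h
    have h2 : (algebraMap (Polynomial ℚ) (RatFunc ℚ)) (Polynomial.X ^ j) =
        (algebraMap (Polynomial ℚ) (RatFunc ℚ)) 1 := by
      simpa [map_pow, RatFunc.algebraMap_X] using h
    have h3 := RatFunc.algebraMap_injective ℚ h2
    have h4 := congrArg Polynomial.natDegree h3
    simp [Polynomial.natDegree_X_pow] at h4
    exact hj h4
  rcases lt_or_gt_of_ne hm with h | h
  · intro hc
    have : (RatFunc.X : RatFunc ℚ) ^ (-m) = 1 := by
      rw [zpow_neg, hc, inv_one]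
    exact key (-m).toNat (by omega) (by rwa [Int.toNat_of_nonneg (by omega)])
  · intro hc
    exact key m.toNat (by omega) (by rwa [Int.toNat_of_nonneg (by omega)])

private lemma one_sub_X_zpow_ne_zero (m : ℤ) (hm : m ≠ 0) :
    (1 : RatFunc ℚ) - RatFunc.X ^ m ≠ 0 :=
  sub_ne_zero_of_ne (Ne.symm (X_zpow_ne_one m hm))

private lemma X_zpow_sub_one_ne_zero (m : ℤ) (hm : m ≠ 0) :
    (RatFunc.X : RatFunc ℚ) ^ m - 1 ≠ 0 :=
  sub_ne_zero_of_ne (X_zpow_ne_one m hm)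

/-- The summand of the colored Jones sum. -/
noncomputable def tt (n k : ℕ) : RatFunc ℚ :=
  (-1) ^ k * RatFunc.X ^ ((k * (k + 3) : ℤ) / 2 + (n : ℤ) * k) *
    (∏ j ∈ range k, (1 - RatFunc.X ^ (-(n : ℤ) - 1 - j))) *
    (∏ j ∈ range k, (1 - RatFunc.X ^ (-(n : ℤ) + 1 + j)))

private lemma tt_zero (n : ℕ) : tt n 0 = 1 := by
  simp [tt]

private lemma tt_vanish (n k : ℕ) (h1 : 1 ≤ n) (h2 : n ≤ k) : tt n k = 0 := by
  have : (∏ j ∈ range k, (1 - (RatFunc.X : RatFunc ℚ) ^ (-(n : ℤ) + 1 + j))) = 0 := by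
    apply Finset.prod_eq_zero (Finset.mem_range.mpr (show n - 1 < k by omega))
    have : -(n : ℤ) + 1 + ((n - 1 : ℕ) : ℤ) = 0 := by omega
    rw [this, zpow_zero, sub_self]
  rw [tt, this, mul_zero]

private lemma tt_succ (n k : ℕ) :
    tt n (k + 1) = -RatFunc.X ^ ((n : ℤ) + k + 2) * (1 - RatFunc.X ^ (-(n : ℤ) - 1 - k)) *
      (1 - RatFunc.X ^ (-(n : ℤ) + 1 + k)) * tt n k := by
  have hX : (RatFunc.X : RatFunc ℚ) ≠ 0 := RatFunc.X_ne_zero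
  have he : ((k + 1 : ℕ) : ℤ) * (((k + 1 : ℕ) : ℤ) + 3) / 2 + (n : ℤ) * ((k + 1 : ℕ) : ℤ) =
      ((k : ℤ) * ((k : ℤ) + 3) / 2 + (n : ℤ) * (k : ℤ)) + ((n : ℤ) + (k : ℤ) + 2) := by
    push_cast
    rw [show ((k : ℤ) + 1) * ((k : ℤ) + 1 + 3) = (k : ℤ) * ((k : ℤ) + 3) + ((k : ℤ) + 2) * 2 from by
      ring, Int.add_mul_ediv_right _ _ (two_ne_zero)]
    ring
  rw [tt, tt, he, zpow_add₀ hX, prod_range_succ, prod_range_succ, pow_succ]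
  ring

private lemma shiftA (m : ℤ) (k : ℕ) :
    (1 - (RatFunc.X : RatFunc ℚ) ^ (-m)) * ∏ j ∈ range k, (1 - RatFunc.X ^ (-m - 1 - (j : ℤ))) =
    (1 - RatFunc.X ^ (-m - (k : ℤ))) * ∏ j ∈ range k, (1 - RatFunc.X ^ (-m - (j : ℤ))) := by
  have h1 := Finset.prod_range_succ (fun j : ℕ => 1 - (RatFunc.X : RatFunc ℚ) ^ (-m - (j : ℤ))) k
  have h2 := Finset.prod_range_succ' (fun j : ℕ => 1 - (RatFunc.X : RatFunc ℚ) ^ (-m - (j : ℤ))) k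
  simp only [Nat.cast_zero, sub_zero] at h2
  have h3 : (∏ j ∈ range k, (1 - (RatFunc.X : RatFunc ℚ) ^ (-m - ((j + 1 : ℕ) : ℤ)))) =
      ∏ j ∈ range k, (1 - RatFunc.X ^ (-m - 1 - (j : ℤ))) :=
    Finset.prod_congr rfl fun j _ => by congr 1; push_cast; ring
  rw [h3] at h2
  rw [h1] at h2
  linear_combination -h2

private lemma shiftB (m : ℤ) (k : ℕ) :
    (1 - (RatFunc.X : RatFunc ℚ) ^ (-m + 1)) * ∏ j ∈ range k, (1 - RatFunc.X ^ (-m + 2 + (j : ℤ))) =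
    (1 - RatFunc.X ^ (-m + 1 + (k : ℤ))) * ∏ j ∈ range k, (1 - RatFunc.X ^ (-m + 1 + (j : ℤ))) := by
  have h1 := Finset.prod_range_succ (fun j : ℕ => 1 - (RatFunc.X : RatFunc ℚ) ^ (-m + 1 + (j : ℤ))) k
  have h2 := Finset.prod_range_succ' (fun j : ℕ => 1 - (RatFunc.X : RatFunc ℚ) ^ (-m + 1 + (j : ℤ))) k
  simp only [Nat.cast_zero, add_zero] at h2
  have h3 : (∏ j ∈ range k, (1 - (RatFunc.X : RatFunc ℚ) ^ (-m + 1 + ((j + 1 : ℕ) : ℤ)))) =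
      ∏ j ∈ range k, (1 - RatFunc.X ^ (-m + 2 + (j : ℤ))) :=
    Finset.prod_congr rfl fun j _ => by congr 1; push_cast; ring
  rw [h3] at h2
  rw [h1] at h2
  linear_combination -h2

/-- The telescoping certificate. -/
noncomputable def Gf (n k : ℕ) : RatFunc ℚ :=
  RatFunc.X ^ (n : ℤ) * (RatFunc.X - RatFunc.X ^ ((n : ℤ) + (n : ℤ))) /
    (RatFunc.X * RatFunc.X * RatFunc.X ^ (k : ℤ) * (RatFunc.X ^ ((n : ℤ) + (k : ℤ)) - 1)) * tt n k

set_option maxHeartbeats 2000000 in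
private lemma key (n k : ℕ) (hn : 2 ≤ n) :
    tt n k + RatFunc.X ^ (3 * (n : ℤ) - 1) * (1 - RatFunc.X ^ ((n : ℤ) - 1)) /
        (1 - RatFunc.X ^ (n : ℤ)) * tt (n - 1) k
      = Gf n (k + 1) - Gf n k := by
  have hX : (RatFunc.X : RatFunc ℚ) ≠ 0 := RatFunc.X_ne_zero
  -- canonicalize products in tt (n-1) k
  have hPA : (∏ j ∈ range k, (1 - (RatFunc.X : RatFunc ℚ) ^ (-((n - 1 : ℕ) : ℤ) - 1 - (j : ℤ)))) =
      ∏ j ∈ range k, (1 - RatFunc.X ^ (-(n : ℤ) - (j : ℤ))) :=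
    Finset.prod_congr rfl fun j _ => by
      rw [show -((n - 1 : ℕ) : ℤ) - 1 - (j : ℤ) = -(n : ℤ) - (j : ℤ) from by omega]
  have hPB : (∏ j ∈ range k, (1 - (RatFunc.X : RatFunc ℚ) ^ (-((n - 1 : ℕ) : ℤ) + 1 + (j : ℤ)))) =
      ∏ j ∈ range k, (1 - RatFunc.X ^ (-(n : ℤ) + 2 + (j : ℤ))) :=
    Finset.prod_congr rfl fun j _ => by
      rw [show -((n - 1 : ℕ) : ℤ) + 1 + (j : ℤ) = -(n : ℤ) + 2 + (j : ℤ) from by omega]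
  have hstep := tt_succ n k
  have hsA := shiftA (n : ℤ) k
  have hsB := shiftB (n : ℤ) k
  simp only [Gf]
  rw [hstep]
  simp only [tt]
  rw [hPA, hPB]
  rw [show ((k : ℤ) * ((k : ℤ) + 3)) / 2 + ((n - 1 : ℕ) : ℤ) * (k : ℤ) =
      ((k : ℤ) * ((k : ℤ) + 3) / 2 + (n : ℤ) * (k : ℤ)) + (-(k : ℤ)) from by
    have : ((n - 1 : ℕ) : ℤ) = (n : ℤ) - 1 := by omega
    rw [this]; ring]
  rw [show (RatFunc.X : RatFunc ℚ) ^ (((k : ℤ) * ((k : ℤ) + 3) / 2 + (n : ℤ) * (k : ℤ)) + (-(k : ℤ)))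
      = RatFunc.X ^ ((k : ℤ) * ((k : ℤ) + 3) / 2 + (n : ℤ) * (k : ℤ)) * (RatFunc.X ^ (k : ℤ))⁻¹ from by
    rw [zpow_add₀ RatFunc.X_ne_zero, zpow_neg]]
  set T := (RatFunc.X : RatFunc ℚ) ^ ((k : ℤ) * ((k : ℤ) + 3) / 2 + (n : ℤ) * (k : ℤ)) with hTdef
  set A := ∏ j ∈ range k, (1 - (RatFunc.X : RatFunc ℚ) ^ (-(n : ℤ) - 1 - (j : ℤ))) with hAdef
  set B := ∏ j ∈ range k, (1 - (RatFunc.X : RatFunc ℚ) ^ (-(n : ℤ) + 1 + (j : ℤ))) with hBdef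
  set A' := ∏ j ∈ range k, (1 - (RatFunc.X : RatFunc ℚ) ^ (-(n : ℤ) - (j : ℤ))) with hA'def
  set B' := ∏ j ∈ range k, (1 - (RatFunc.X : RatFunc ℚ) ^ (-(n : ℤ) + 2 + (j : ℤ))) with hB'def
  -- decompose all remaining zpows into x = X^n, u = X^k, X
  simp only [show (3 : ℤ) * (n : ℤ) = (n : ℤ) + (n : ℤ) + (n : ℤ) from by ring,
    Nat.cast_add, Nat.cast_one, show (2 : ℤ) = 1 + 1 from by norm_num,
    zpow_add₀ hX, zpow_sub₀ hX, zpow_neg, zpow_one] at hsA hsB ⊢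
  set x := (RatFunc.X : RatFunc ℚ) ^ (n : ℤ) with hxdef
  set u := (RatFunc.X : RatFunc ℚ) ^ (k : ℤ) with hudef
  have hx : x ≠ 0 := by rw [hxdef]; exact zpow_ne_zero _ hX
  have hu : u ≠ 0 := by rw [hudef]; exact zpow_ne_zero _ hX
  have h1x : (1 : RatFunc ℚ) - x ≠ 0 := by
    rw [hxdef]; exact one_sub_X_zpow_ne_zero _ (by omega)
  have hxu1 : x * u - 1 ≠ 0 := by
    rw [hxdef, hudef, ← zpow_add₀ hX]; exact X_zpow_sub_one_ne_zero _ (by omega)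
  have hxuX1 : x * (u * RatFunc.X) - 1 ≠ 0 := by
    have h : x * (u * RatFunc.X) = RatFunc.X ^ ((n : ℤ) + (k : ℤ) + 1) := by
      rw [hxdef, hudef, zpow_add₀ hX, zpow_add₀ hX, zpow_one]; ring
    rw [h]; exact X_zpow_sub_one_ne_zero _ (by omega)
  have hxX : x - RatFunc.X ≠ 0 := by
    intro h
    have h2 : (RatFunc.X : RatFunc ℚ) ^ (n : ℤ) = RatFunc.X := by
      rw [← hxdef]; linear_combination h
    have h3 : (RatFunc.X : RatFunc ℚ) ^ ((n : ℤ) - 1) = 1 := by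
      rw [zpow_sub₀ hX, zpow_one, h2, div_self hX]
    exact X_zpow_ne_one _ (by omega) h3
  field_simp [hx, hu] at hsA hsB
  have hA'val : A' = (x - 1) * u * A / (x * u - 1) := by
    rw [eq_div_iff hxu1]
    have h4 : x * (A' * (x * u - 1)) = x * ((x - 1) * u * A) := by linear_combination (-x) * hsA
    linear_combination mul_left_cancel₀ hx h4
  have hB'val : B' = (x - RatFunc.X * u) * B / (x - RatFunc.X) := by
    rw [eq_div_iff hxX]; linear_combination hsB
  rw [hA'val, hB'val]
  have hb1 : -(RatFunc.X ^ 4 * x ^ 2 * u ^ 2) + RatFunc.X ^ 5 * x ^ 3 * u ^ 3 ≠ 0 := by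
    have he : -(RatFunc.X ^ 4 * x ^ 2 * u ^ 2) + RatFunc.X ^ 5 * x ^ 3 * u ^ 3 =
        RatFunc.X ^ 4 * x ^ 2 * u ^ 2 * (x * (u * RatFunc.X) - 1) := by ring
    rw [he]
    exact mul_ne_zero (mul_ne_zero (mul_ne_zero (pow_ne_zero _ hX) (pow_ne_zero _ hx))
      (pow_ne_zero _ hu)) hxuX1
  have hb2 : -(RatFunc.X ^ 2 * u) + RatFunc.X ^ 2 * x * u ^ 2 ≠ 0 := by
    have he : -(RatFunc.X ^ 2 * u) + RatFunc.X ^ 2 * x * u ^ 2 =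
        RatFunc.X ^ 2 * u * (x * u - 1) := by ring
    rw [he]
    exact mul_ne_zero (mul_ne_zero (pow_ne_zero _ hX) hu) hxu1
  field_simp [hb1, hb2]
  have hD : RatFunc.X * RatFunc.X * (u * RatFunc.X) * (x * (u * RatFunc.X) - 1) *
      (x * RatFunc.X * u * x) ≠ 0 :=
    mul_ne_zero (mul_ne_zero (mul_ne_zero (mul_ne_zero hX hX) (mul_ne_zero hu hX)) hxuX1)
      (mul_ne_zero (mul_ne_zero (mul_ne_zero hx hX) hu) hx)
  have hfrac : (-(x * (RatFunc.X - x * x) *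
          (x * u * (RatFunc.X * RatFunc.X) * (x * RatFunc.X * u - 1) * (x - RatFunc.X * u) *
            ((-1) ^ k * T * A * B)) *
        (RatFunc.X * RatFunc.X * u * (x * u - 1)))) /
      (RatFunc.X * RatFunc.X * (u * RatFunc.X) * (x * (u * RatFunc.X) - 1) *
        (x * RatFunc.X * u * x)) =
      -((RatFunc.X - x * x) * (x - RatFunc.X * u) * (x * u - 1) * ((-1) ^ k * T * A * B)) := by
    rw [div_eq_iff hD]; ring
  rw [mul_div_cancel_right₀ _ (show x * RatFunc.X * u - 1 ≠ 0 by
    rw [show x * RatFunc.X * u = x * (u * RatFunc.X) by ring]; exact hxuX1)]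
  ring

private lemma J31_eq (n : ℕ) : J31 n = ∑ k ∈ range (n + 1), tt n k := rfl

/-- The first-order inhomogeneous recursion for the trefoil: for all `n ≥ 1`,
`J(n) = q^{n-2}(q^{2n} - q)/(qⁿ - 1) − q^{3n-1}(1 - q^{n-1})/(1 - qⁿ) ⋅ J(n-1)`. -/
theorem J31_recursion (n : ℕ) (hn : 1 ≤ n) :
    J31 n =
      RatFunc.X ^ ((n : ℤ) - 2) * (RatFunc.X ^ (2 * (n : ℤ)) - RatFunc.X) /
          (RatFunc.X ^ (n : ℤ) - 1) -
        RatFunc.X ^ (3 * (n : ℤ) - 1) * (1 - RatFunc.X ^ ((n : ℤ) - 1)) /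
          (1 - RatFunc.X ^ (n : ℤ)) * J31 (n - 1) := by
  have hX : (RatFunc.X : RatFunc ℚ) ≠ 0 := RatFunc.X_ne_zero
  rcases eq_or_lt_of_le hn with h1 | h2
  · -- n = 1
    subst h1
    have e0 : J31 0 = 1 := by
      rw [J31_eq, Finset.sum_range_one, tt_zero]
    have e1 : J31 1 = 1 := by
      rw [J31_eq, Finset.sum_range_succ, Finset.sum_range_one, tt_zero,
        tt_vanish 1 1 le_rfl le_rfl, add_zero]
    rw [e1, show (1 : ℕ) - 1 = 0 from rfl, e0]
    norm_num
    have hX1 : (RatFunc.X : RatFunc ℚ) - 1 ≠ 0 := by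
      have := X_zpow_sub_one_ne_zero 1 one_ne_zero
      rwa [zpow_one] at this
    rw [show (RatFunc.X : RatFunc ℚ) ^ (2 : ℕ) = RatFunc.X * RatFunc.X from pow_two _,
      eq_div_iff hX1]
    field_simp
  · -- 2 ≤ n
    have hn2 : 2 ≤ n := h2
    have hsum : ∑ k ∈ range (n + 1),
        (tt n k + RatFunc.X ^ (3 * (n : ℤ) - 1) * (1 - RatFunc.X ^ ((n : ℤ) - 1)) /
          (1 - RatFunc.X ^ (n : ℤ)) * tt (n - 1) k) = Gf n (n + 1) - Gf n 0 := by
      rw [← Finset.sum_range_sub (Gf n) (n + 1)]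
      exact Finset.sum_congr rfl fun k _ => key n k hn2
    rw [Finset.sum_add_distrib, ← Finset.mul_sum] at hsum
    have h2' : ∑ k ∈ range (n + 1), tt (n - 1) k = J31 (n - 1) := by
      rw [Finset.sum_range_succ, tt_vanish (n - 1) n (by omega) (by omega), add_zero,
        J31_eq, show n - 1 + 1 = n from by omega]
    have h3 : Gf n (n + 1) = 0 := by
      rw [Gf, tt_vanish n (n + 1) (by omega) (by omega), mul_zero]
    have h4 : Gf n 0 = -(RatFunc.X ^ ((n : ℤ) - 2) * (RatFunc.X ^ (2 * (n : ℤ)) - RatFunc.X) /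
        (RatFunc.X ^ (n : ℤ) - 1)) := by
      rw [Gf, tt_zero, mul_one]
      simp only [Nat.cast_zero, zpow_zero, mul_one, add_zero]
      rw [show (2 : ℤ) * (n : ℤ) = (n : ℤ) + (n : ℤ) from by ring,
        show ((n : ℤ) - 2) = (n : ℤ) - (1 + 1) from by ring,
        zpow_sub₀ hX, zpow_add₀ hX, zpow_add₀ hX, zpow_one]
      have hden : (RatFunc.X : RatFunc ℚ) ^ (n : ℤ) - 1 ≠ 0 :=
        X_zpow_sub_one_ne_zero _ (by omega)
      field_simp
      ring
    rw [← J31_eq, h2', h3, h4] at hsum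
    linear_combination hsum
end

section
/- Setting q = 1 in the third-order recursion operator for the figure-eight knot and substituting Q = M², X = L yields ((−1+L)(L − LM² − M⁴ − 2LM⁴ − L²M⁴ − LM⁶ + LM⁸))/(L³M²(1+M²)²) in ℚ(L,M); in particular, up to multiplication by a rational function of M and a power of L, this equals the A-polynomial A(4₁) = (L−1)(−L + LM² + M⁴ + 2LM⁴ + L²M⁴ + LM⁶ − LM⁸). -/
/-- The field `ℚ(L,M)` of rational functions in two commuting variables. -/
abbrev KLM : Type := RatFunc (RatFunc ℚ)

/-- The variable `L`. -/
noncomputable def Lv : KLM := RatFunc.X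

/-- The variable `M`. -/
noncomputable def Mv : KLM := RatFunc.C RatFunc.X

/-! At `q = 1`, `Q = M²` the operator is a rational identity valid in any field where `L`, `M`,
`1 + M²` and `1 - M⁴` are invertible; in `ℚ(L,M)` they are, as `M` is transcendental over `ℚ`. -/

open Polynomial

/-- The third-order recursion operator of the figure-eight knot, as a function of `q`, `Q` and the
shift `X`. -/
def figure8Operator {K : Type*} [Field K] (q Q X : K) : K :=
  q * (-1 + Q) * Q / ((q + Q) * (q - Q ^ 2)) +
    q ^ 2 * Q * (-q ^ 3 + Q) / ((q ^ 2 + Q) * (-q ^ 5 + Q ^ 2) * X ^ 3) -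
    (q ^ 2 - Q) *
        (q ^ 8 - 2 * q ^ 6 * Q + q ^ 7 * Q - q ^ 3 * Q ^ 2 + q ^ 4 * Q ^ 2 -
          q ^ 5 * Q ^ 2 + q * Q ^ 3 - 2 * q ^ 2 * Q ^ 3 + Q ^ 4) /
      (q ^ 2 * Q * (q + Q) * (q ^ 5 - Q ^ 2) * X ^ 2) +
    (-q + Q) *
        (q ^ 4 + q ^ 2 * Q - 2 * q ^ 3 * Q - q * Q ^ 2 + q ^ 2 * Q ^ 2 -
          q ^ 3 * Q ^ 2 - 2 * q * Q ^ 3 + q ^ 2 * Q ^ 3 + Q ^ 4) /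
      (q * Q * (q ^ 2 + Q) * (-q + Q ^ 2) * X)

theorem figure8Operator_one_sq {K : Type*} [Field K] {L M : K} (hL : L ≠ 0) (hM : M ≠ 0)
    (hM₂ : 1 + M ^ 2 ≠ 0) (hM₄ : 1 - M ^ 4 ≠ 0) :
    figure8Operator 1 (M ^ 2) L =
      (-1 + L) * (L - L * M ^ 2 - M ^ 4 - 2 * L * M ^ 4 - L ^ 2 * M ^ 4 - L * M ^ 6 + L * M ^ 8) /
        (L ^ 3 * M ^ 2 * (1 + M ^ 2) ^ 2) := by
  have hM₄' : -1 + M ^ 4 ≠ 0 := by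
    rwa [neg_add_eq_sub, ← neg_sub, neg_ne_zero]
  simp only [figure8Operator, one_pow, one_mul, mul_one, ← pow_mul]
  field_simp
  ring

theorem aeval_Mv_ne_zero {p : ℚ[X]} (hp : p ≠ 0) : aeval Mv p ≠ 0 := by
  -- `aeval_X_left_eq_algebraMap` is stated for the ℚ-algebra structure coming from `ℚ[X]`.
  rw [Mv, ← RingHom.toRatAlgHom_apply, aeval_algHom_apply, _root_.map_ne_zero,
    Subsingleton.elim (DivisionRing.toRatAlgebra : Algebra ℚ (RatFunc ℚ))
      (RatFunc.instAlgebraOfPolynomial ℚ ℚ)]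
  simpa using RatFunc.algebraMap_ne_zero hp

theorem Lv_ne_zero : Lv ≠ 0 := RatFunc.X_ne_zero

theorem Mv_ne_zero : Mv ≠ 0 := by
  simpa using aeval_Mv_ne_zero X_ne_zero

theorem one_add_Mv_sq_ne_zero : 1 + Mv ^ 2 ≠ 0 := by
  have h := aeval_Mv_ne_zero (p := 1 + X ^ 2) fun h ↦ by simpa using congrArg (eval 0) h
  simpa using h

theorem one_sub_Mv_pow_four_ne_zero : 1 - Mv ^ 4 ≠ 0 := by
  have h := aeval_Mv_ne_zero (p := 1 - X ^ 4) fun h ↦ by simpa using congrArg (eval 0) h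
  simpa using h

/-- Substituting `q = 1`, `Q = M²`, `X = L` into the third-order recursion operator
for the figure-eight knot,
`q(−1+Q)Q/((q+Q)(q−Q²)) + q²Q(−q³+Q)/((q²+Q)(−q⁵+Q²)X³)
 − (q²−Q)(q⁸−2q⁶Q+q⁷Q−q³Q²+q⁴Q²−q⁵Q²+qQ³−2q²Q³+Q⁴)/(q²Q(q+Q)(q⁵−Q²)X²)
 + (−q+Q)(q⁴+q²Q−2q³Q−qQ²+q²Q²−q³Q²−2qQ³+q²Q³+Q⁴)/(qQ(q²+Q)(−q+Q²)X)`,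
yields `((−1+L)(L−LM²−M⁴−2LM⁴−L²M⁴−LM⁶+LM⁸))/(L³M²(1+M²)²)` in `ℚ(L,M)`; up to a
rational function of `M` and a power of `L` this is the A-polynomial `A(4₁)`. -/
theorem figure8_operator_at_q_one (q Q X : KLM)
    (hq : q = 1) (hQ : Q = Mv ^ 2) (hX : X = Lv) :
    q * (-1 + Q) * Q / ((q + Q) * (q - Q ^ 2)) +
      q ^ 2 * Q * (-q ^ 3 + Q) / ((q ^ 2 + Q) * (-q ^ 5 + Q ^ 2) * X ^ 3) -
      (q ^ 2 - Q) *
          (q ^ 8 - 2 * q ^ 6 * Q + q ^ 7 * Q - q ^ 3 * Q ^ 2 + q ^ 4 * Q ^ 2 -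
            q ^ 5 * Q ^ 2 + q * Q ^ 3 - 2 * q ^ 2 * Q ^ 3 + Q ^ 4) /
        (q ^ 2 * Q * (q + Q) * (q ^ 5 - Q ^ 2) * X ^ 2) +
      (-q + Q) *
          (q ^ 4 + q ^ 2 * Q - 2 * q ^ 3 * Q - q * Q ^ 2 + q ^ 2 * Q ^ 2 -
            q ^ 3 * Q ^ 2 - 2 * q * Q ^ 3 + q ^ 2 * Q ^ 3 + Q ^ 4) /
        (q * Q * (q ^ 2 + Q) * (-q + Q ^ 2) * X) =
    (-1 + Lv) *
        (Lv - Lv * Mv ^ 2 - Mv ^ 4 - 2 * Lv * Mv ^ 4 - Lv ^ 2 * Mv ^ 4 -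
          Lv * Mv ^ 6 + Lv * Mv ^ 8) /
      (Lv ^ 3 * Mv ^ 2 * (1 + Mv ^ 2) ^ 2) := by
  subst hq hQ hX
  exact figure8Operator_one_sq Lv_ne_zero Mv_ne_zero one_add_Mv_sq_ne_zero
    one_sub_Mv_pow_four_ne_zero
end
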